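/- arXiv:2206.13086 — 3 statements merged into one kernel-verified Lean document; each statement's English description precedes it below -/
import Mathlib

section
/- Assume q_1 ≥ q_2 ≥ ⋯ ≥ q_d and γ ≥ 0. Define for τ ∈ {0,…,d}: π̄(τ) = Σ_{s=1}^{τ} Σ_{l=0}^{d−1} (2 q_s/(τ+l+γ+1)) P(Γ_{∖s} = l) + Σ_{l=0}^{d} (γ/(τ+l+γ)) P(Γ = l), with the convention γ/(τ+l+γ) := 0 when τ = l = γ = 0. If 1 ≤ τ ≤ d−1 and Σ_{s=1}^{τ} q_s ≥ (τ + γ + d) q_{τ+1}, then π̄(τ) ≥ π̄(τ') for every τ' ∈ {τ+1, …, d}. -/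
open Finset

/-- `P(Γ_S = l)` where `Γ_S = Σ_{j ∈ S} Bⱼ` is a Poisson-binomial random variable with
independent Bernoulli summands of success probabilities `qⱼ`. -/
noncomputable def pmfOn {d : ℕ} (S : Finset (Fin d)) (q : Fin d → ℝ) (l : ℕ) : ℝ :=
  ∑ y : Fin d → Bool,
    if (∀ j, j ∉ S → y j = false) ∧ (S.filter (fun j => y j = true)).card = l then
      ∏ j ∈ S, (if y j = true then q j else 1 - q j)
    else 0

/-- The volume score for sorted probabilities `q_1 ≥ ⋯ ≥ q_d`:
`π̄(τ) = Σ_{s=1}^{τ} Σ_{l=0}^{d-1} (2 q_s/(τ+l+γ+1)) P(Γ_{∖s} = l)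
        + Σ_{l=0}^{d} (γ/(τ+l+γ)) P(Γ = l)`
(the convention `γ/(τ+l+γ) := 0` when `τ = l = γ = 0` is Lean's `0/0 = 0`). -/
noncomputable def piBar {d : ℕ} (γ : ℝ) (q : Fin d → ℝ) (τ : ℕ) : ℝ :=
  (∑ s ∈ Finset.univ.filter (fun s : Fin d => (s : ℕ) < τ), ∑ l ∈ Finset.range d,
      (2 * q s / ((τ : ℝ) + (l : ℝ) + γ + 1)) * pmfOn (Finset.univ.erase s) q l)
  + ∑ l ∈ Finset.range (d + 1), (γ / ((τ : ℝ) + (l : ℝ) + γ)) * pmfOn Finset.univ q l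

/-!
Write `E_S f = E[f(Γ_S)]` and `c(l) = 2/(τ+γ+1+l) − 2/(τ+γ+2+l)`. Passing from `π̄(τ)` to
`π̄(τ+1)` lowers the `γ`-part and lowers each summand `s ≤ τ` by `q_s E_{∖s} c`, but adds the summand
`q_{τ+1} E_{∖(τ+1)}[2/(τ+γ+2+l)]`. As `2/(τ+γ+2+l) = (τ+γ+1+l) c(l) ≤ (τ+γ+d) c(l)` for `l ≤ d−1`,
the hypothesis bounds the new summand by `Σ_{s≤τ} q_s E_{∖(τ+1)} c`. Since `c` is decreasing and
`Γ_{∖s}` is stochastically smaller than `Γ_{∖(τ+1)}` when `q_s ≥ q_{τ+1}` (the two differ only in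
which of the coins `s`, `τ+1` is tossed), `E_{∖(τ+1)} c ≤ E_{∖s} c`, so `π̄(τ+1) ≤ π̄(τ)`. The
hypothesis at `τ` implies the one at `τ+1` because `q` is decreasing, so the step iterates up to `d`.
-/

section

variable {d : ℕ}

noncomputable def subsetWeight (S T : Finset (Fin d)) (q : Fin d → ℝ) : ℝ :=
  ∏ j ∈ S, if j ∈ T then q j else 1 - q j

/-- `E[f(Γ_S)]`, summed over the set `T ⊆ S` of successful trials. -/
noncomputable def expectOn (S : Finset (Fin d)) (q : Fin d → ℝ) (f : ℕ → ℝ) : ℝ :=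
  ∑ T ∈ S.powerset, subsetWeight S T q * f T.card

lemma pmfOn_eq_sum_powersetCard (S : Finset (Fin d)) (q : Fin d → ℝ) (l : ℕ) :
    pmfOn S q l = ∑ T ∈ S.powersetCard l, subsetWeight S T q := by
  unfold pmfOn subsetWeight
  rw [← Finset.sum_filter]
  refine Finset.sum_nbij' (fun y => S.filter (y · = true)) (fun T j => decide (j ∈ T))
    ?_ ?_ ?_ ?_ ?_
  · intro y hy
    simp_all [Finset.mem_powersetCard, Finset.filter_subset]
  · intro T hT
    rw [Finset.mem_powersetCard] at hT
    simp only [Finset.mem_filter, Finset.mem_univ, true_and, decide_eq_true_eq,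
      decide_eq_false_iff_not]
    exact ⟨fun j hj hjT => hj (hT.1 hjT), by rw [Finset.filter_mem_eq_inter,
      Finset.inter_eq_right.mpr hT.1, hT.2]⟩
  · intro y hy
    simp only [Finset.mem_filter, Finset.mem_univ, true_and] at hy
    funext j
    by_cases hj : j ∈ S <;> simp [hj, hy.1 j]
  · intro T hT
    rw [Finset.mem_powersetCard] at hT
    ext j
    simpa using fun hj => hT.1 hj
  · intro y _
    refine Finset.prod_congr rfl fun j hj => ?_
    simp [hj]

lemma sum_range_mul_pmfOn {S : Finset (Fin d)} {n : ℕ} (hn : S.card < n) (q : Fin d → ℝ)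
    (f : ℕ → ℝ) : ∑ l ∈ Finset.range n, f l * pmfOn S q l = expectOn S q f := by
  have hzero : ∀ l ∈ Finset.range n, l ∉ Finset.range (S.card + 1) → f l * pmfOn S q l = 0 := by
    intro l _ hl
    rw [Finset.mem_range, not_lt] at hl
    rw [pmfOn_eq_sum_powersetCard, Finset.powersetCard_eq_empty.mpr (by omega), Finset.sum_empty,
      mul_zero]
  rw [expectOn, Finset.sum_powerset, ← Finset.sum_subset (Finset.range_subset_range.mpr hn) hzero]
  refine Finset.sum_congr rfl fun l _ => ?_
  rw [pmfOn_eq_sum_powersetCard, Finset.mul_sum]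
  refine Finset.sum_congr rfl fun T hT => ?_
  rw [(Finset.mem_powersetCard.mp hT).2, mul_comm]

lemma subsetWeight_nonneg (S T : Finset (Fin d)) {q : Fin d → ℝ}
    (hq : ∀ j, q j ∈ Set.Icc (0 : ℝ) 1) : 0 ≤ subsetWeight S T q :=
  Finset.prod_nonneg fun j _ => by split_ifs <;> linarith [(hq j).1, (hq j).2]

lemma expectOn_mono (S : Finset (Fin d)) {q : Fin d → ℝ} (hq : ∀ j, q j ∈ Set.Icc (0 : ℝ) 1)
    {f g : ℕ → ℝ} (hfg : ∀ l ≤ S.card, f l ≤ g l) : expectOn S q f ≤ expectOn S q g :=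
  Finset.sum_le_sum fun T hT => mul_le_mul_of_nonneg_left
    (hfg _ (Finset.card_le_card (Finset.mem_powerset.mp hT))) (subsetWeight_nonneg S T hq)

lemma expectOn_nonneg (S : Finset (Fin d)) {q : Fin d → ℝ} (hq : ∀ j, q j ∈ Set.Icc (0 : ℝ) 1)
    {f : ℕ → ℝ} (hf : 0 ≤ f) : 0 ≤ expectOn S q f :=
  Finset.sum_nonneg fun T _ => mul_nonneg (subsetWeight_nonneg S T hq) (hf _)

lemma expectOn_sub (S : Finset (Fin d)) (q : Fin d → ℝ) (f g : ℕ → ℝ) :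
    expectOn S q (fun l => f l - g l) = expectOn S q f - expectOn S q g := by
  simp only [expectOn, mul_sub, Finset.sum_sub_distrib]

lemma expectOn_const_mul (S : Finset (Fin d)) (q : Fin d → ℝ) (c : ℝ) (f : ℕ → ℝ) :
    expectOn S q (fun l => c * f l) = c * expectOn S q f := by
  simp only [expectOn, Finset.mul_sum]
  exact Finset.sum_congr rfl fun T _ => by ring

lemma expectOn_insert {S : Finset (Fin d)} {t : Fin d} (ht : t ∉ S) (q : Fin d → ℝ)
    (f : ℕ → ℝ) :
    expectOn (insert t S) q f
      = (1 - q t) * expectOn S q f + q t * expectOn S q (fun l => f (l + 1)) := by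
  rw [expectOn, Finset.sum_powerset_insert ht, expectOn, expectOn, Finset.mul_sum, Finset.mul_sum]
  congr 1 <;> refine Finset.sum_congr rfl fun T hT => ?_
  · have htT : t ∉ T := fun h => ht (Finset.mem_powerset.mp hT h)
    rw [subsetWeight, Finset.prod_insert ht, if_neg htT, subsetWeight]
    ring
  · have htT : t ∉ T := fun h => ht (Finset.mem_powerset.mp hT h)
    have hS : ∀ j ∈ S, (j ∈ insert t T ↔ j ∈ T) := fun j hj =>
      by simp [Finset.mem_insert, show j ≠ t from fun h => ht (h ▸ hj)]
    rw [subsetWeight, Finset.prod_insert ht, if_pos (Finset.mem_insert_self t T),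
      Finset.card_insert_of_notMem htT, subsetWeight,
      Finset.prod_congr rfl fun j hj => by rw [if_congr (hS j hj) rfl rfl]]
    ring

lemma expectOn_erase_le_erase {S : Finset (Fin d)} {s t : Fin d} (hs : s ∈ S) (ht : t ∈ S)
    (hst : s ≠ t) {q : Fin d → ℝ} (hq : ∀ j, q j ∈ Set.Icc (0 : ℝ) 1) (hqts : q t ≤ q s)
    {f : ℕ → ℝ} (hf : Antitone f) : expectOn (S.erase t) q f ≤ expectOn (S.erase s) q f := by
  set R := (S.erase s).erase t
  have hR_t : insert t R = S.erase s := Finset.insert_erase (Finset.mem_erase.mpr ⟨hst.symm, ht⟩)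
  have hR_s : insert s R = S.erase t := by
    rw [show R = (S.erase t).erase s from Finset.erase_right_comm]
    exact Finset.insert_erase (Finset.mem_erase.mpr ⟨hst, hs⟩)
  have hshift : expectOn R q (fun l => f (l + 1)) ≤ expectOn R q f :=
    expectOn_mono R hq fun l _ => hf (Nat.le_succ l)
  rw [← hR_t, ← hR_s, expectOn_insert (by simp [R]), expectOn_insert (by simp [R])]
  linarith [mul_nonneg (sub_nonneg.mpr hqts) (sub_nonneg.mpr hshift)]

end

section Kernel

variable {x : ℝ}

lemma two_div_sub_two_div_succ (hx : 0 < x) (l : ℕ) :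
    2 / (x + l) - 2 / (x + (l + 1 : ℕ)) = 2 / ((x + l) * (x + l + 1)) := by
  have : 0 < x + l := by positivity
  push_cast
  field_simp
  ring

lemma antitone_two_div_sub_two_div_succ (hx : 0 < x) :
    Antitone fun l : ℕ => 2 / (x + l) - 2 / (x + (l + 1 : ℕ)) := fun m n hmn => by
  simp only [two_div_sub_two_div_succ hx]
  gcongr

lemma two_div_sub_two_div_succ_nonneg (hx : 0 < x) :
    0 ≤ fun l : ℕ => 2 / (x + l) - 2 / (x + (l + 1 : ℕ)) := fun l => by
  simp only [Pi.zero_apply, two_div_sub_two_div_succ hx]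
  positivity

lemma two_div_succ_le_mul_sub (hx : 0 < x) {y : ℝ} {l : ℕ} (hy : x + l ≤ y) :
    2 / (x + (l + 1 : ℕ)) ≤ y * (2 / (x + l) - 2 / (x + (l + 1 : ℕ))) := by
  have : 0 < x + l := by positivity
  calc 2 / (x + (l + 1 : ℕ)) = (x + l) * (2 / (x + l) - 2 / (x + (l + 1 : ℕ))) := by
        rw [two_div_sub_two_div_succ hx]
        push_cast
        field_simp
        ring
    _ ≤ y * (2 / (x + l) - 2 / (x + (l + 1 : ℕ))) :=
        mul_le_mul_of_nonneg_right hy (two_div_sub_two_div_succ_nonneg hx l)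

end Kernel

section

variable {d : ℕ}

lemma piBar_eq_expectOn (γ : ℝ) (q : Fin d → ℝ) (τ : ℕ) :
    piBar γ q τ = ∑ s ∈ Finset.univ.filter (fun s : Fin d => (s : ℕ) < τ),
        q s * expectOn (Finset.univ.erase s) q (fun l => 2 / ((τ : ℝ) + γ + 1 + l))
      + expectOn Finset.univ q (fun l => γ / ((τ : ℝ) + γ + l)) := by
  have hcard_erase : ∀ s : Fin d, (Finset.univ.erase s).card < d := fun s => by
    rw [Finset.card_erase_of_mem (Finset.mem_univ s), Finset.card_univ, Fintype.card_fin]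
    exact Nat.sub_lt (Fin.pos s) one_pos
  have hcard_univ : (Finset.univ : Finset (Fin d)).card < d + 1 := by simp
  rw [piBar, ← sum_range_mul_pmfOn hcard_univ]
  congr 1
  · refine Finset.sum_congr rfl fun s _ => ?_
    rw [← sum_range_mul_pmfOn (hcard_erase s), Finset.mul_sum]
    exact Finset.sum_congr rfl fun l _ => by ring
  · exact Finset.sum_congr rfl fun l _ => by ring

lemma sum_filter_lt_succ {M : Type*} [AddCommMonoid M] (f : Fin d → M) {τ : ℕ} (hτ : τ < d) :
    ∑ s ∈ Finset.univ.filter (fun s : Fin d => (s : ℕ) < τ + 1), f s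
      = ∑ s ∈ Finset.univ.filter (fun s : Fin d => (s : ℕ) < τ), f s + f ⟨τ, hτ⟩ := by
  have hsplit : Finset.univ.filter (fun s : Fin d => (s : ℕ) < τ + 1)
      = insert ⟨τ, hτ⟩ (Finset.univ.filter (fun s : Fin d => (s : ℕ) < τ)) := by
    ext s
    simp only [Finset.mem_filter, Finset.mem_univ, true_and, Finset.mem_insert, Fin.ext_iff]
    omega
  rw [hsplit, Finset.sum_insert (by simp), add_comm]

lemma shrinkage_condition_succ {γ : ℝ} (hγ : 0 ≤ γ) {q : Fin d → ℝ} (hsort : Antitone q)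
    {τ : ℕ} (hτd : τ < d) (hτd' : τ + 1 < d)
    (hcond : ((τ : ℝ) + γ + d) * q ⟨τ, hτd⟩ ≤
      ∑ s ∈ Finset.univ.filter (fun s : Fin d => (s : ℕ) < τ), q s) :
    (((τ + 1 : ℕ) : ℝ) + γ + d) * q ⟨τ + 1, hτd'⟩ ≤
      ∑ s ∈ Finset.univ.filter (fun s : Fin d => (s : ℕ) < τ + 1), q s := by
  have hq_succ : q ⟨τ + 1, hτd'⟩ ≤ q ⟨τ, hτd⟩ := hsort (Fin.mk_le_mk.mpr τ.le_succ)
  have hcoeff : (0 : ℝ) ≤ τ + 1 + γ + d := by positivity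
  rw [sum_filter_lt_succ q hτd]
  push_cast
  linarith [mul_le_mul_of_nonneg_left hq_succ hcoeff]

lemma shrinkage_condition_of_le {γ : ℝ} (hγ : 0 ≤ γ) {q : Fin d → ℝ} (hsort : Antitone q)
    {τ : ℕ} (hτd : τ < d)
    (hcond : ((τ : ℝ) + γ + d) * q ⟨τ, hτd⟩ ≤
      ∑ s ∈ Finset.univ.filter (fun s : Fin d => (s : ℕ) < τ), q s)
    {k : ℕ} (hτk : τ ≤ k) (hkd : k < d) :
    ((k : ℝ) + γ + d) * q ⟨k, hkd⟩ ≤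
      ∑ s ∈ Finset.univ.filter (fun s : Fin d => (s : ℕ) < k), q s := by
  induction k, hτk using Nat.le_induction with
  | base => exact hcond
  | succ k _ ih => exact shrinkage_condition_succ hγ hsort (by omega) hkd (ih (by omega))

/-- Passing from `τ` to `τ + 1` adds the summand `s = τ` to `π̄` and lowers all the others;
the gain is at most the loss. -/
lemma piBar_gain_le_loss {γ : ℝ} (hγ : 0 ≤ γ) {q : Fin d → ℝ}
    (hq : ∀ j, q j ∈ Set.Icc (0 : ℝ) 1) (hsort : Antitone q) {τ : ℕ} (hτd : τ < d)
    (hcond : ((τ : ℝ) + γ + d) * q ⟨τ, hτd⟩ ≤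
      ∑ s ∈ Finset.univ.filter (fun s : Fin d => (s : ℕ) < τ), q s) :
    q ⟨τ, hτd⟩ * expectOn (Finset.univ.erase ⟨τ, hτd⟩) q
        (fun l => 2 / ((τ : ℝ) + γ + 1 + (l + 1 : ℕ)))
      ≤ ∑ s ∈ Finset.univ.filter (fun s : Fin d => (s : ℕ) < τ), q s *
          expectOn (Finset.univ.erase s) q
            (fun l => 2 / ((τ : ℝ) + γ + 1 + l) - 2 / ((τ : ℝ) + γ + 1 + (l + 1 : ℕ))) := by
  set t : Fin d := ⟨τ, hτd⟩
  set lower := Finset.univ.filter (fun s : Fin d => (s : ℕ) < τ)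
  set x : ℝ := τ + γ + 1
  have hx : 0 < x := by positivity
  set c : ℕ → ℝ := fun l => 2 / (x + l) - 2 / (x + (l + 1 : ℕ))
  have hc_nonneg : 0 ≤ c := two_div_sub_two_div_succ_nonneg hx
  have hgain_le : ∀ l ≤ (Finset.univ.erase t).card,
      2 / (x + (l + 1 : ℕ)) ≤ ((τ : ℝ) + γ + d) * c l := by
    intro l hl
    rw [Finset.card_erase_of_mem (Finset.mem_univ t), Finset.card_univ, Fintype.card_fin] at hl
    have hld : (l : ℝ) + 1 ≤ d := by exact_mod_cast (show l + 1 ≤ d by omega)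
    exact two_div_succ_le_mul_sub hx (by simp only [x]; linarith)
  have hcomp : ∀ s ∈ lower,
      expectOn (Finset.univ.erase t) q c ≤ expectOn (Finset.univ.erase s) q c := fun s hs =>
    have hst : s < t := Fin.lt_def.mpr (Finset.mem_filter.mp hs).2
    expectOn_erase_le_erase (Finset.mem_univ s) (Finset.mem_univ t) hst.ne hq (hsort hst.le)
      (antitone_two_div_sub_two_div_succ hx)
  calc q t * expectOn (Finset.univ.erase t) q (fun l => 2 / (x + (l + 1 : ℕ)))
      ≤ q t * (((τ : ℝ) + γ + d) * expectOn (Finset.univ.erase t) q c) := by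
        rw [← expectOn_const_mul _ _ _ c]
        exact mul_le_mul_of_nonneg_left (expectOn_mono _ hq hgain_le) (hq t).1
    _ ≤ (∑ s ∈ lower, q s) * expectOn (Finset.univ.erase t) q c := by
        rw [← mul_assoc, mul_comm (q t)]
        exact mul_le_mul_of_nonneg_right hcond (expectOn_nonneg _ hq hc_nonneg)
    _ ≤ ∑ s ∈ lower, q s * expectOn (Finset.univ.erase s) q c := by
        rw [Finset.sum_mul]
        exact Finset.sum_le_sum fun s hs => mul_le_mul_of_nonneg_left (hcomp s hs) (hq s).1

lemma piBar_succ_le {γ : ℝ} (hγ : 0 ≤ γ) {q : Fin d → ℝ} (hq : ∀ j, q j ∈ Set.Icc (0 : ℝ) 1)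
    (hsort : Antitone q) {τ : ℕ} (hτd : τ < d)
    (hcond : ((τ : ℝ) + γ + d) * q ⟨τ, hτd⟩ ≤
      ∑ s ∈ Finset.univ.filter (fun s : Fin d => (s : ℕ) < τ), q s) :
    piBar γ q (τ + 1) ≤ piBar γ q τ := by
  have hshift : (fun l : ℕ => 2 / (((τ + 1 : ℕ) : ℝ) + γ + 1 + l))
      = fun l => 2 / ((τ : ℝ) + γ + 1 + (l + 1 : ℕ)) := by
    funext l
    push_cast
    ring_nf
  have htail : expectOn Finset.univ q (fun l => γ / (((τ + 1 : ℕ) : ℝ) + γ + l))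
      ≤ expectOn Finset.univ q (fun l => γ / ((τ : ℝ) + γ + l)) := by
    refine expectOn_mono _ hq fun l _ => ?_
    rcases hγ.eq_or_lt with rfl | hγpos
    · simp
    · push_cast
      gcongr
      linarith
  have hgain := piBar_gain_le_loss hγ hq hsort hτd hcond
  rw [piBar_eq_expectOn, piBar_eq_expectOn, sum_filter_lt_succ _ hτd, hshift]
  simp only [expectOn_sub, mul_sub, Finset.sum_sub_distrib] at hgain
  linarith

end

theorem piBar_shrinkage_general {d : ℕ} (γ : ℝ) (hγ : 0 ≤ γ) (q : Fin d → ℝ)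
    (hq : ∀ j, q j ∈ Set.Icc (0 : ℝ) 1) (hsort : Antitone q)
    (τ : ℕ) (hτd : τ < d)
    (hcond : ((τ : ℝ) + γ + d) * q ⟨τ, hτd⟩ ≤
      ∑ s ∈ Finset.univ.filter (fun s : Fin d => (s : ℕ) < τ), q s) :
    ∀ τ', τ < τ' → τ' ≤ d → piBar γ q τ' ≤ piBar γ q τ := by
  intro τ' hττ' hτ'd
  induction τ', hττ' using Nat.le_induction with
  | base => exact piBar_succ_le hγ hq hsort hτd hcond
  | succ k hτk ih =>
    have hkd : k < d := by omega
    have hcond_k := shrinkage_condition_of_le hγ hsort hτd hcond (by omega) hkd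
    exact (piBar_succ_le hγ hq hsort hkd hcond_k).trans (ih hkd.le)

/-- **Shrinkage.** If `q_1 ≥ ⋯ ≥ q_d`, `γ ≥ 0`, `1 ≤ τ ≤ d-1` and
`Σ_{s=1}^{τ} q_s ≥ (τ + γ + d) q_{τ+1}`, then `π̄(τ) ≥ π̄(τ')` for every `τ' ∈ {τ+1,…,d}`. -/
theorem piBar_shrinkage {d : ℕ} (γ : ℝ) (hγ : 0 ≤ γ) (q : Fin d → ℝ)
    (hq : ∀ j, q j ∈ Set.Icc (0 : ℝ) 1) (hsort : Antitone q)
    (τ : ℕ) (hτ1 : 1 ≤ τ) (hτd : τ < d)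
    (hcond : ((τ : ℝ) + γ + d) * q ⟨τ, hτd⟩ ≤
      ∑ s ∈ Finset.univ.filter (fun s : Fin d => (s : ℕ) < τ), q s) :
    ∀ τ', τ < τ' → τ' ≤ d → piBar γ q τ' ≤ piBar γ q τ :=
  piBar_shrinkage_general γ hγ q hq hsort τ hτd hcond
end

section
/- Assume q_1 ≥ q_2 ≥ ⋯ ≥ q_d, γ ≥ 0 and 1 ≤ τ ≤ d. Define ω_{τ,l} = Σ_{s=1}^{τ} q_s P(Γ_{∖s} = l) for l ∈ {0,…,d−1}. Then for any integers 0 ≤ l_L ≤ l_U ≤ d−1: (i) Σ_{l=l_U+1}^{d−1} 2 ω_{τ,l}/(τ+l+γ+1) ≤ (2τ/(τ+l_U+γ+1)) P(Γ > l_U), and (ii) Σ_{l=0}^{l_L−1} 2 ω_{τ,l}/(τ+l+γ+1) ≤ (2τ/(τ+γ+1)) P(Γ ≤ l_L). Hence the error of truncating the sum Σ_{l=0}^{d−1} 2 ω_{τ,l}/(τ+l+γ+1) to l ∈ {l_L,…,l_U} is at most (2τ/(τ+l_U+γ+1)) P(Γ > l_U) + (2τ/(τ+γ+1)) P(Γ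 ≤ l_L). -/
open Finset

/-- Weight of a binary configuration `y` under independent Bernoulli probabilities `q`. -/
noncomputable def bw {d : ℕ} (q : Fin d → ℝ) (y : Fin d → Bool) : ℝ :=
  ∏ j, if y j = true then q j else 1 - q j

/-- Number of `true` coordinates of `y`. -/
def cnt {d : ℕ} (y : Fin d → Bool) : ℕ :=
  (Finset.univ.filter (fun j => y j = true)).card

/-- `P(Γ > l)` for the full Poisson-binomial variable `Γ = Σⱼ Bⱼ`. -/
noncomputable def probGt {d : ℕ} (q : Fin d → ℝ) (l : ℕ) : ℝ :=
  ∑ y : Fin d → Bool, if l < cnt y then bw q y else 0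

/-- `P(Γ ≤ l)` for the full Poisson-binomial variable `Γ = Σⱼ Bⱼ`. -/
noncomputable def probLe {d : ℕ} (q : Fin d → ℝ) (l : ℕ) : ℝ :=
  ∑ y : Fin d → Bool, if cnt y ≤ l then bw q y else 0

/-- `ω_{τ,l} = Σ_{s=1}^{τ} q_s P(Γ_{∖s} = l)`. -/
noncomputable def omegaTL {d : ℕ} (q : Fin d → ℝ) (τ l : ℕ) : ℝ :=
  ∑ s ∈ Finset.univ.filter (fun s : Fin d => (s : ℕ) < τ),
    q s * pmfOn (Finset.univ.erase s) q l

/-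
Conditioning on `B_s = 1` gives `q_s P(Γ_{∖s} = l) = P(B_s = 1, Γ = l + 1) ≤ P(Γ = l + 1)`, hence
`ω_{τ,l} ≤ τ P(Γ = l + 1)`. Bounding each denominator `τ + l + γ + 1` from below by its value at
the inner end of the tail, the upper tail is at most `2τ/(τ+l_U+γ+1) Σ_{l > l_U} P(Γ = l + 1)`,
which is at most `2τ/(τ+l_U+γ+1) P(Γ > l_U)`, and likewise the lower tail is at most
`2τ/(τ+γ+1) P(Γ ≤ l_L)`. The truncation error is the sum of the two tails.
-/

noncomputable def probEq {d : ℕ} (q : Fin d → ℝ) (k : ℕ) : ℝ :=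
  ∑ y : Fin d → Bool, if cnt y = k then bw q y else 0

section

variable {d : ℕ} (q : Fin d → ℝ)

lemma bw_nonneg (hq : ∀ j, q j ∈ Set.Icc (0 : ℝ) 1) (y : Fin d → Bool) : 0 ≤ bw q y :=
  prod_nonneg fun j _ => by split <;> linarith [(hq j).1, (hq j).2]

lemma bw_update_true (y : Fin d → Bool) (s : Fin d) :
    bw q (Function.update y s true) =
      q s * ∏ j ∈ univ.erase s, if y j = true then q j else 1 - q j := by
  rw [bw, ← mul_prod_erase univ _ (mem_univ s), Function.update_self, if_pos rfl]
  congr 1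
  refine prod_congr rfl fun j hj => ?_
  rw [Function.update_of_ne (ne_of_mem_erase hj)]

lemma cnt_update_true {y : Fin d → Bool} {s : Fin d} (hs : y s = false) :
    cnt (Function.update y s true) = cnt y + 1 := by
  have : univ.filter (fun j => Function.update y s true j = true) =
      insert s (univ.filter fun j => y j = true) := by
    ext j
    rcases eq_or_ne j s with rfl | hj <;> simp [*]
  rw [cnt, cnt, this, card_insert_of_notMem (by simp [hs])]

lemma pmfOn_erase_eq (s : Fin d) (l : ℕ) :
    pmfOn (univ.erase s) q l = ∑ y : Fin d → Bool,
      if y s = false ∧ cnt y = l then ∏ j ∈ univ.erase s, (if y j = true then q j else 1 - q j)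
      else 0 := by
  refine sum_congr rfl fun y _ => if_congr ?_ rfl rfl
  have houtside : (∀ j, j ∉ univ.erase s → y j = false) ↔ y s = false := by simp
  rw [houtside]
  refine and_congr_right fun hs => ?_
  rw [cnt, filter_erase, erase_eq_of_notMem (by simp [hs])]

lemma mul_pmfOn_erase (s : Fin d) (l : ℕ) :
    q s * pmfOn (univ.erase s) q l =
      ∑ y : Fin d → Bool, if y s = true ∧ cnt y = l + 1 then bw q y else 0 := by
  -- flipping coordinate `s` matches `{y s = false, cnt y = l}` with `{y s = true, cnt y = l + 1}`
  let flip : Equiv.Perm (Fin d → Bool) :=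
    Function.Involutive.toPerm (fun y => Function.update y s !(y s)) fun y => by
      funext j; rcases eq_or_ne j s with rfl | hj <;> simp [Function.update_of_ne, *]
  rw [pmfOn_erase_eq, mul_sum, ← Equiv.sum_comp flip (fun y => if y s = true ∧ _ then _ else _)]
  refine sum_congr rfl fun y _ => ?_
  have hflip : flip y = Function.update y s !(y s) := rfl
  cases hs : y s
  · simp only [hflip, hs, Bool.not_false, Function.update_self, cnt_update_true hs,
      bw_update_true, true_and, Nat.add_right_cancel_iff, mul_ite, mul_zero]
  · simp [hflip, hs]

lemma probEq_nonneg (hq : ∀ j, q j ∈ Set.Icc (0 : ℝ) 1) (k : ℕ) : 0 ≤ probEq q k :=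
  sum_nonneg fun y _ => by split <;> [exact bw_nonneg q hq y; exact le_rfl]

lemma mul_pmfOn_erase_le_probEq (hq : ∀ j, q j ∈ Set.Icc (0 : ℝ) 1) (s : Fin d) (l : ℕ) :
    q s * pmfOn (univ.erase s) q l ≤ probEq q (l + 1) := by
  rw [mul_pmfOn_erase]
  refine sum_le_sum fun y _ => ?_
  split_ifs with h h' h'
  exacts [le_rfl, absurd h.2 h', bw_nonneg q hq y, le_rfl]

lemma omegaTL_nonneg (hq : ∀ j, q j ∈ Set.Icc (0 : ℝ) 1) (τ l : ℕ) : 0 ≤ omegaTL q τ l := by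
  refine sum_nonneg fun s _ => ?_
  rw [mul_pmfOn_erase]
  exact sum_nonneg fun y _ => by split <;> [exact bw_nonneg q hq y; exact le_rfl]

lemma omegaTL_le (hq : ∀ j, q j ∈ Set.Icc (0 : ℝ) 1) (τ l : ℕ) :
    omegaTL q τ l ≤ τ * probEq q (l + 1) :=
  calc omegaTL q τ l
      ≤ #(univ.filter fun s : Fin d => (s : ℕ) < τ) • probEq q (l + 1) :=
        sum_le_card_nsmul _ _ _ fun s _ => mul_pmfOn_erase_le_probEq q hq s l
    _ ≤ τ * probEq q (l + 1) := by
        rw [nsmul_eq_mul]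
        gcongr
        · exact probEq_nonneg q hq _
        · exact_mod_cast Fin.card_filter_val_lt.trans_le (min_le_right d τ)

lemma sum_probEq_succ_le (hq : ∀ j, q j ∈ Set.Icc (0 : ℝ) 1) (S : Finset ℕ) (P : ℕ → Prop)
    [DecidablePred P] (hS : ∀ l ∈ S, P (l + 1)) :
    ∑ l ∈ S, probEq q (l + 1) ≤ ∑ y : Fin d → Bool, if P (cnt y) then bw q y else 0 := by
  have hshift : ∑ l ∈ S, probEq q (l + 1) = ∑ k ∈ S.map (addRightEmbedding 1), probEq q k := by
    rw [sum_map]; rfl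
  rw [hshift]
  simp only [probEq]
  rw [sum_comm]
  refine sum_le_sum fun y _ => ?_
  rw [sum_ite_eq]
  split_ifs with hmem hP hP
  · exact le_rfl
  · obtain ⟨l, hl, hly⟩ := mem_map.mp hmem
    exact absurd (hly ▸ hS l hl) hP
  · exact bw_nonneg q hq y
  · exact le_rfl

lemma sum_omegaTL_div_le (hq : ∀ j, q j ∈ Set.Icc (0 : ℝ) 1) (τ : ℕ) (γ : ℝ) (S : Finset ℕ)
    {c : ℝ} (hc : 0 < c) (hcS : ∀ l ∈ S, c ≤ (τ : ℝ) + l + γ + 1) :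
    ∑ l ∈ S, 2 * omegaTL q τ l / ((τ : ℝ) + l + γ + 1) ≤
      2 * τ / c * ∑ l ∈ S, probEq q (l + 1) := by
  rw [mul_sum]
  refine sum_le_sum fun l hl => ?_
  calc 2 * omegaTL q τ l / ((τ : ℝ) + l + γ + 1)
      ≤ 2 * omegaTL q τ l / c := by
        gcongr
        · linarith [omegaTL_nonneg q hq τ l]
        · exact hcS l hl
    _ ≤ 2 * (τ * probEq q (l + 1)) / c := by
        gcongr
        exact omegaTL_le q hq τ l
    _ = 2 * τ / c * probEq q (l + 1) := by ring

end

lemma sum_range_sub_sum_Icc {M : Type*} [AddCommGroup M] (f : ℕ → M) {a b n : ℕ} (hab : a ≤ b)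
    (hbn : b < n) :
    ∑ l ∈ range n, f l - ∑ l ∈ Icc a b, f l = ∑ l ∈ range a, f l + ∑ l ∈ Ico (b + 1) n, f l := by
  rw [range_eq_Ico, range_eq_Ico, ← sum_Ico_consecutive f (Nat.zero_le (b + 1)) hbn,
    ← sum_Ico_consecutive f (Nat.zero_le a) (by omega : a ≤ b + 1), Ico_add_one_right_eq_Icc]
  abel

theorem omega_truncation_error_general {d : ℕ} (γ : ℝ) (hγ : 0 ≤ γ) (q : Fin d → ℝ)
    (hq : ∀ j, q j ∈ Set.Icc (0 : ℝ) 1)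
    (τ : ℕ) (hτ1 : 1 ≤ τ) (hτd : τ ≤ d)
    (lL lU : ℕ) (hll : lL ≤ lU) (hlu : lU ≤ d - 1) :
    (∑ l ∈ Finset.Ico (lU + 1) d, 2 * omegaTL q τ l / ((τ : ℝ) + (l : ℝ) + γ + 1) ≤
        (2 * (τ : ℝ) / ((τ : ℝ) + (lU : ℝ) + γ + 1)) * probGt q lU) ∧
    (∑ l ∈ Finset.range lL, 2 * omegaTL q τ l / ((τ : ℝ) + (l : ℝ) + γ + 1) ≤
        (2 * (τ : ℝ) / ((τ : ℝ) + γ + 1)) * probLe q lL) ∧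
    |(∑ l ∈ Finset.range d, 2 * omegaTL q τ l / ((τ : ℝ) + (l : ℝ) + γ + 1)) -
        ∑ l ∈ Finset.Icc lL lU, 2 * omegaTL q τ l / ((τ : ℝ) + (l : ℝ) + γ + 1)| ≤
      (2 * (τ : ℝ) / ((τ : ℝ) + (lU : ℝ) + γ + 1)) * probGt q lU +
        (2 * (τ : ℝ) / ((τ : ℝ) + γ + 1)) * probLe q lL := by
  have hcU : 0 < (τ : ℝ) + lU + γ + 1 := by positivity
  have hc0 : 0 < (τ : ℝ) + γ + 1 := by positivity
  have hterm (l : ℕ) : 0 ≤ 2 * omegaTL q τ l / ((τ : ℝ) + l + γ + 1) :=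
    div_nonneg (by linarith [omegaTL_nonneg q hq τ l]) (by positivity)
  have hupper : ∑ l ∈ Ico (lU + 1) d, 2 * omegaTL q τ l / ((τ : ℝ) + l + γ + 1) ≤
      2 * τ / ((τ : ℝ) + lU + γ + 1) * probGt q lU := by
    refine (sum_omegaTL_div_le q hq τ γ _ hcU fun l hl => ?_).trans ?_
    · have : (lU : ℝ) + 1 ≤ l := by exact_mod_cast (mem_Ico.mp hl).1
      linarith
    · exact mul_le_mul_of_nonneg_left (sum_probEq_succ_le q hq (Ico (lU + 1) d) (lU < ·)
        fun l hl => by have := (mem_Ico.mp hl).1; omega) (by positivity)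
  have hlower : ∑ l ∈ range lL, 2 * omegaTL q τ l / ((τ : ℝ) + l + γ + 1) ≤
      2 * τ / ((τ : ℝ) + γ + 1) * probLe q lL := by
    refine (sum_omegaTL_div_le q hq τ γ _ hc0
      fun l _ => by linarith [l.cast_nonneg (α := ℝ)]).trans ?_
    exact mul_le_mul_of_nonneg_left (sum_probEq_succ_le q hq (range lL) (· ≤ lL)
      fun l hl => mem_range.mp hl) (by positivity)
  refine ⟨hupper, hlower, ?_⟩
  rw [sum_range_sub_sum_Icc _ hll (by omega),
    abs_of_nonneg (add_nonneg (sum_nonneg fun l _ => hterm l) (sum_nonneg fun l _ => hterm l))]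
  linarith

/-- **Truncation error of the volume-score tail sums.** With `q_1 ≥ ⋯ ≥ q_d`, `γ ≥ 0`,
`1 ≤ τ ≤ d`, `0 ≤ l_L ≤ l_U ≤ d-1`:
(i) the upper tail is at most `(2τ/(τ+l_U+γ+1)) P(Γ > l_U)`;
(ii) the lower tail is at most `(2τ/(τ+γ+1)) P(Γ ≤ l_L)`;
hence the truncation error is at most the sum of the two bounds. -/
theorem omega_truncation_error {d : ℕ} (γ : ℝ) (hγ : 0 ≤ γ) (q : Fin d → ℝ)
    (hq : ∀ j, q j ∈ Set.Icc (0 : ℝ) 1) (hsort : Antitone q)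
    (τ : ℕ) (hτ1 : 1 ≤ τ) (hτd : τ ≤ d)
    (lL lU : ℕ) (hll : lL ≤ lU) (hlu : lU ≤ d - 1) :
    (∑ l ∈ Finset.Ico (lU + 1) d, 2 * omegaTL q τ l / ((τ : ℝ) + (l : ℝ) + γ + 1) ≤
        (2 * (τ : ℝ) / ((τ : ℝ) + (lU : ℝ) + γ + 1)) * probGt q lU) ∧
    (∑ l ∈ Finset.range lL, 2 * omegaTL q τ l / ((τ : ℝ) + (l : ℝ) + γ + 1) ≤
        (2 * (τ : ℝ) / ((τ : ℝ) + γ + 1)) * probLe q lL) ∧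
    |(∑ l ∈ Finset.range d, 2 * omegaTL q τ l / ((τ : ℝ) + (l : ℝ) + γ + 1)) -
        ∑ l ∈ Finset.Icc lL lU, 2 * omegaTL q τ l / ((τ : ℝ) + (l : ℝ) + γ + 1)| ≤
      (2 * (τ : ℝ) / ((τ : ℝ) + (lU : ℝ) + γ + 1)) * probGt q lU +
        (2 * (τ : ℝ) / ((τ : ℝ) + γ + 1)) * probLe q lL :=
  omega_truncation_error_general γ hγ q hq τ hτ1 hτd lL lU hll hlu
end

section
/- Assume q_1 ≥ q_2 ≥ ⋯ ≥ q_d, γ ≥ 0, and let 1 ≤ τ ≤ d−1 with τ + γ > 0 and q_{τ+1} < 1. Define ϖ(τ) = (Σ_{s=1}^{τ} q_s + γ) · Σ_{l=0}^{d−τ} P(Γ_{∖{1,…,τ}} = l)/(τ + l + γ), where Γ_{∖{1,…,τ}} = Σ_{j>τ} B_j. If Σ_{s=1}^{τ} q_s + γ ≥ (q_{τ+1}/(1 − q_{τ+1})) · max( d + γ, ((d−τ) q_{τ+1} + τ + γ)²/(τ + γ) ), then ϖ(τ) ≥ ϖ(τ') for all τ' ∈ {τ+1, …, d}. -/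
open Finset

/-- The IoU volume score for sorted probabilities `q_1 ≥ ⋯ ≥ q_d`:
`ϖ(τ) = (Σ_{s=1}^{τ} q_s + γ) · Σ_{l=0}^{d-τ} P(Γ_{∖{1,…,τ}} = l)/(τ + l + γ)`,
where `Γ_{∖{1,…,τ}} = Σ_{j>τ} Bⱼ`. -/
noncomputable def iouVol {d : ℕ} (γ : ℝ) (q : Fin d → ℝ) (τ : ℕ) : ℝ :=
  ((∑ s ∈ Finset.univ.filter (fun s : Fin d => (s : ℕ) < τ), q s) + γ) *
    ∑ l ∈ Finset.range (d - τ + 1),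
      pmfOn (Finset.univ.filter (fun s : Fin d => τ ≤ (s : ℕ))) q l /
        ((τ : ℝ) + (l : ℝ) + γ)

/-!
Write `ϖ(t) = C_t · E[(a + Γ_t)⁻¹]` with `a = t + γ`, `C_t = Σ_{s ≤ t} q_s + γ` and `Γ_t` the
number of successes after position `t`. Splitting off the Bernoulli variable with parameter
`p = q_{t+1}` gives `ϖ(t) - ϖ(t+1) = C_t (1 - p) (F - E') - p E'` with
`F = E[(a + Γ_{t+1})⁻¹]` and `E' = E[(a + 1 + Γ_{t+1})⁻¹]`. Here `E' ≤ (a + 1)⁻¹`, while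
`F - E' = E[1 / (v (v + 1))]` at `v = a + Γ_{t+1}`, which by convexity (a tangent line at the
mean) is at least `1 / (U (U + 1))` for `U = a + E Γ_{t+1}`; the hypothesis makes the difference
nonnegative. The hypothesis at level `t` implies the one at level `t + 1` (this is where the term
`d + γ` of the maximum is needed), so `ϖ` decreases step by step from `τ` to `d`.
-/

lemma tangent_le_inv_mul_add_one {U v : ℝ} (hU : 0 < U) (hv : 0 < v) :
    (U * (U + 1))⁻¹ - (2 * U + 1) / (U * (U + 1)) ^ 2 * (v - U) ≤ (v * (v + 1))⁻¹ := by
  have key : (v * (v + 1))⁻¹ - ((U * (U + 1))⁻¹ - (2 * U + 1) / (U * (U + 1)) ^ 2 * (v - U)) =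
      (v - U) ^ 2 * ((2 * U + 1) * v + (U + 1) ^ 2) / (v * (v + 1) * (U * (U + 1)) ^ 2) := by
    field_simp
    ring
  have : 0 ≤ (v - U) ^ 2 * ((2 * U + 1) * v + (U + 1) ^ 2) / (v * (v + 1) * (U * (U + 1)) ^ 2) := by
    positivity
  linarith

/-- With `n = d - t` and `a = t + γ` this is the maximum in the hypothesis at level `t`. -/
noncomputable def shrinkBound (n a p : ℝ) : ℝ := max (n + a) ((n * p + a) ^ 2 / a)

lemma shrinkBound_pred_le {n a p : ℝ} (ha : 0 < a) (hn : 2 ≤ n) :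
    shrinkBound (n - 1) (a + 1) p ≤ shrinkBound n a p := by
  refine max_le (le_max_of_le_left (by linarith)) ?_
  rcases le_or_gt (((n - 1) * p + (a + 1)) ^ 2) ((a + 1) * (n + a)) with h | h
  · exact le_max_of_le_left ((div_le_iff₀ (by linarith)).2 (by linarith))
  · refine le_max_of_le_right ((div_le_div_iff₀ (by linarith) ha).2 ?_)
    have hT : 0 ≤ (n * p + a) + n * (1 - p) - 2 * (n * p + a) * (1 - p) - (1 - p) ^ 2 := by
      by_contra! hU
      nlinarith [mul_pos (show (0:ℝ) < n - 1 by linarith)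
          (show (0:ℝ) < 2 * (n * p + a) * (1 - p) + (1 - p) ^ 2 - (n * p + a) - n * (1 - p) by
            linarith),
        mul_nonneg (mul_nonneg (by linarith : (0:ℝ) ≤ n) (by linarith : (0:ℝ) ≤ n - 1))
          (sq_nonneg (1 - p))]
    nlinarith [mul_nonneg (by linarith : (0:ℝ) ≤ a + 1) hT]

lemma shrinkBound_mono {n b x p : ℝ} (hb : 0 < b) (hn : 0 ≤ n) (hx : 0 ≤ x) (hxp : x ≤ p) :
    shrinkBound n b x ≤ shrinkBound n b p := by
  refine max_le_max le_rfl (div_le_div_of_nonneg_right ?_ hb.le)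
  exact pow_le_pow_left₀ (by positivity) (by nlinarith) 2

lemma shrinkBound_cond_succ {n a p x C : ℝ} (ha : 0 < a) (hn : 2 ≤ n) (hp : p ∈ Set.Icc (0 : ℝ) 1)
    (hx : 0 ≤ x) (hxp : x ≤ p) (h : p * shrinkBound n a p ≤ C * (1 - p)) :
    x * shrinkBound (n - 1) (a + 1) x ≤ (C + p) * (1 - x) := by
  have hB : 0 < shrinkBound n a p := lt_max_of_lt_left (by linarith)
  have hC : 0 ≤ C := by
    rcases hp.2.lt_or_eq with hp1 | rfl
    · nlinarith [mul_nonneg hp.1 hB.le]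
    · linarith
  calc x * shrinkBound (n - 1) (a + 1) x
      ≤ x * shrinkBound n a p :=
        mul_le_mul_of_nonneg_left ((shrinkBound_mono (by linarith) (by linarith) hx hxp).trans
          (shrinkBound_pred_le ha hn)) hx
    _ ≤ p * shrinkBound n a p := mul_le_mul_of_nonneg_right hxp hB.le
    _ ≤ C * (1 - p) := h
    _ ≤ (C + p) * (1 - x) := by nlinarith [hp.2]

section PoissonBinomial

variable {ι : Type*} [DecidableEq ι]

/-- `E[f(Γ_S)]` for the Poisson-binomial variable `Γ_S = Σ_{j ∈ S} B_j`. -/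
noncomputable def poissonBinomialExpect (S : Finset ι) (q : ι → ℝ) (f : ℕ → ℝ) : ℝ :=
  ∑ T ∈ S.powerset, ((∏ j ∈ T, q j) * ∏ j ∈ S \ T, (1 - q j)) * f #T

@[simp]
lemma poissonBinomialExpect_empty (q : ι → ℝ) (f : ℕ → ℝ) :
    poissonBinomialExpect ∅ q f = f 0 := by
  simp [poissonBinomialExpect]

lemma poissonBinomialExpect_insert {i : ι} {S : Finset ι} (hi : i ∉ S) (q : ι → ℝ)
    (f : ℕ → ℝ) :
    poissonBinomialExpect (insert i S) q f =
      (1 - q i) * poissonBinomialExpect S q f +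
        q i * poissonBinomialExpect S q (fun l => f (l + 1)) := by
  rw [poissonBinomialExpect, sum_powerset_insert hi, poissonBinomialExpect,
    poissonBinomialExpect, mul_sum, mul_sum]
  congr 1 <;> refine sum_congr rfl fun T hT => ?_
  · have hiT : i ∉ T := fun h => hi (mem_powerset.1 hT h)
    rw [insert_sdiff_of_notMem _ hiT, prod_insert (fun h => hi (mem_sdiff.1 h).1)]
    ring
  · have hiT : i ∉ T := fun h => hi (mem_powerset.1 hT h)
    rw [insert_sdiff_insert, sdiff_insert_of_notMem hi, prod_insert hiT,
      card_insert_of_notMem hiT]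
    ring

lemma poissonBinomialExpect_affine (S : Finset ι) (q : ι → ℝ) (c₀ c₁ : ℝ) :
    poissonBinomialExpect S q (fun l => c₀ + c₁ * l) = c₀ + c₁ * ∑ j ∈ S, q j := by
  induction S using Finset.induction_on generalizing c₀ with
  | empty => simp
  | insert i S hi ih =>
    have hshift :
        (fun l : ℕ => c₀ + c₁ * ((l + 1 : ℕ) : ℝ)) = fun l : ℕ => (c₀ + c₁) + c₁ * (l : ℝ) := by
      ext l; push_cast; ring
    rw [poissonBinomialExpect_insert hi, hshift, ih, ih, sum_insert hi]
    ring

lemma poissonBinomialExpect_const (S : Finset ι) (q : ι → ℝ) (c : ℝ) :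
    poissonBinomialExpect S q (fun _ => c) = c := by
  simpa using poissonBinomialExpect_affine S q c 0

lemma poissonBinomialExpect_mono {S : Finset ι} {q : ι → ℝ} (hq : ∀ j ∈ S, q j ∈ Set.Icc 0 1)
    {f g : ℕ → ℝ} (hfg : ∀ l, f l ≤ g l) :
    poissonBinomialExpect S q f ≤ poissonBinomialExpect S q g := by
  refine sum_le_sum fun T hT => mul_le_mul_of_nonneg_left (hfg _) (mul_nonneg ?_ ?_)
  · exact prod_nonneg fun j hj => (hq j (mem_powerset.1 hT hj)).1
  · exact prod_nonneg fun j hj => sub_nonneg.2 (hq j (mem_sdiff.1 hj).1).2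

lemma poissonBinomialExpect_sub (S : Finset ι) (q : ι → ℝ) (f g : ℕ → ℝ) :
    poissonBinomialExpect S q f - poissonBinomialExpect S q g =
      poissonBinomialExpect S q (fun l => f l - g l) := by
  simp only [poissonBinomialExpect, ← sum_sub_distrib, mul_sub]

lemma poissonBinomialExpect_inv_step {S : Finset ι} {q : ι → ℝ} {i : ι} (hi : i ∉ S)
    (hqS : ∀ j ∈ S, q j ∈ Set.Icc 0 1) (hp0 : 0 ≤ q i) {a C : ℝ} (ha : 0 < a)
    (hcond : q i * (a + q i + ∑ j ∈ S, q j) ^ 2 / a ≤ C * (1 - q i)) :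
    (C + q i) * poissonBinomialExpect S q (fun l => (a + 1 + l)⁻¹) ≤
      C * poissonBinomialExpect (insert i S) q (fun l => (a + l)⁻¹) := by
  set p := q i
  set μ := ∑ j ∈ S, q j
  set E' := poissonBinomialExpect S q (fun l => (a + 1 + l)⁻¹)
  set F := poissonBinomialExpect S q (fun l => (a + l)⁻¹)
  have hμ : 0 ≤ μ := sum_nonneg fun j hj => (hqS j hj).1
  have hshift : (fun l : ℕ => (a + ((l + 1 : ℕ) : ℝ))⁻¹) = fun l : ℕ => (a + 1 + l)⁻¹ := by
    ext l; push_cast; ring_nf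
  rw [poissonBinomialExpect_insert hi, hshift]
  have hE' : E' ≤ (a + 1)⁻¹ := by
    calc E' ≤ poissonBinomialExpect S q (fun _ => (a + 1)⁻¹) :=
          poissonBinomialExpect_mono hqS fun l => inv_anti₀ (by positivity) (by simp)
      _ = (a + 1)⁻¹ := poissonBinomialExpect_const S q _
  set U := a + μ with hU_def
  have hU : 0 < U := by positivity
  have hFE : (U * (U + 1))⁻¹ ≤ F - E' := by
    set s := (2 * U + 1) / (U * (U + 1)) ^ 2
    rw [poissonBinomialExpect_sub]
    calc (U * (U + 1))⁻¹ = ((U * (U + 1))⁻¹ - s * (a - U)) - s * μ := by ring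
      _ = poissonBinomialExpect S q (fun l => ((U * (U + 1))⁻¹ - s * (a - U)) + (-s) * l) := by
        rw [poissonBinomialExpect_affine]; ring
      _ ≤ _ := poissonBinomialExpect_mono hqS fun l => by
        have hsplit : (a + l)⁻¹ - (a + 1 + l)⁻¹ = ((a + l) * (a + l + 1))⁻¹ := by
          field_simp; ring
        rw [hsplit]
        linarith [tangent_le_inv_mul_add_one hU (by positivity : 0 < a + l)]
  have hC : 0 ≤ C * (1 - p) := le_trans (by positivity) hcond
  have halg : p * (a + 1)⁻¹ ≤ C * (1 - p) * (U * (U + 1))⁻¹ := by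
    have hM : a * (U * (U + 1)) ≤ (a + 1) * (U + p) ^ 2 := by
      have hUp : U * (U + 1) ≤ (U + p) * (U + p + 1) := by nlinarith
      have haUp : a ≤ U + p := by linarith
      nlinarith [mul_le_mul_of_nonneg_left hUp ha.le]
    have hcond' : p * (U + p) ^ 2 ≤ C * (1 - p) * a := by
      rw [← div_le_iff₀ ha, hU_def, add_right_comm]; exact hcond
    rw [← div_eq_mul_inv, ← div_eq_mul_inv, div_le_div_iff₀ (by positivity) (by positivity)]
    nlinarith [mul_le_mul_of_nonneg_left hM hp0]
  nlinarith [mul_le_mul_of_nonneg_left hE' hp0, mul_le_mul_of_nonneg_left hFE hC]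

end PoissonBinomial

lemma pmfOn_eq_sum_powerset {d : ℕ} (S : Finset (Fin d)) (q : Fin d → ℝ) (l : ℕ) :
    pmfOn S q l = ∑ T ∈ S.powerset with #T = l, (∏ j ∈ T, q j) * ∏ j ∈ S \ T, (1 - q j) := by
  rw [pmfOn, ← sum_filter]
  refine sum_nbij' (fun y => S.filter (y · = true)) (fun T j => decide (j ∈ T)) ?_ ?_ ?_ ?_ ?_
  · intro y hy
    simp_all
  · intro T hT
    simp_all
    exact fun j hj h => hj (hT.1 h)
  · intro y hy
    funext j
    by_cases hj : j ∈ S <;> simp_all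
  · intro T hT
    simp_all
  · intro y hy
    simp only [← filter_not, prod_ite]

lemma sum_range_pmfOn_mul {d : ℕ} {S : Finset (Fin d)} {n : ℕ} (hn : #S < n) (q : Fin d → ℝ)
    (f : ℕ → ℝ) :
    ∑ l ∈ range n, pmfOn S q l * f l = poissonBinomialExpect S q f := by
  simp_rw [pmfOn_eq_sum_powerset, sum_mul]
  rw [poissonBinomialExpect, ← sum_fiberwise_of_maps_to (g := card) (t := range n)]
  · refine sum_congr rfl fun l _ => sum_congr rfl fun T hT => ?_
    rw [(mem_filter.1 hT).2]
  · exact fun T hT => mem_range.2 ((card_le_card (mem_powerset.1 hT)).trans_lt hn)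

section IoU

variable {d : ℕ}

/-- Indices are `0`-based: `tailIdx d t` is the paper's `{t + 1, …, d}`. -/
def tailIdx (d t : ℕ) : Finset (Fin d) := univ.filter (fun s : Fin d => t ≤ (s : ℕ))

noncomputable def headMass (γ : ℝ) (q : Fin d → ℝ) (t : ℕ) : ℝ :=
  (∑ s ∈ univ.filter (fun s : Fin d => (s : ℕ) < t), q s) + γ

lemma card_tailIdx (t : ℕ) : #(tailIdx d t) = d - t := by
  have := card_filter_add_card_filter_not (s := univ) (fun s : Fin d => (s : ℕ) < t)
  simp only [card_univ, Fintype.card_fin, not_lt, Fin.card_filter_val_lt] at this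
  rw [tailIdx]; omega

lemma tailIdx_eq_insert {t : ℕ} (ht : t < d) :
    tailIdx d t = insert ⟨t, ht⟩ (tailIdx d (t + 1)) := by
  ext s; simp [tailIdx, Fin.ext_iff]; omega

lemma notMem_tailIdx_succ {t : ℕ} (ht : t < d) : (⟨t, ht⟩ : Fin d) ∉ tailIdx d (t + 1) := by
  simp [tailIdx]

lemma headMass_succ (γ : ℝ) (q : Fin d → ℝ) {t : ℕ} (ht : t < d) :
    headMass γ q (t + 1) = headMass γ q t + q ⟨t, ht⟩ := by
  have : univ.filter (fun s : Fin d => (s : ℕ) < t + 1) =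
      insert ⟨t, ht⟩ (univ.filter fun s : Fin d => (s : ℕ) < t) := by
    ext s; simp [Fin.ext_iff]; omega
  rw [headMass, headMass, this, sum_insert (by simp)]; ring

lemma iouVol_eq (γ : ℝ) (q : Fin d → ℝ) (t : ℕ) :
    iouVol γ q t = headMass γ q t *
      poissonBinomialExpect (tailIdx d t) q (fun l => ((t : ℝ) + γ + l)⁻¹) := by
  rw [iouVol, headMass, ← sum_range_pmfOn_mul (n := d - t + 1) (by rw [card_tailIdx]; omega)]
  simp only [div_eq_mul_inv, add_right_comm]
  rfl

/-- The hypothesis of the theorem at level `t`, multiplied out by `1 - q_{t+1}`. -/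
def ShrinkCond (γ : ℝ) (q : Fin d → ℝ) (t : ℕ) (ht : t < d) : Prop :=
  q ⟨t, ht⟩ * shrinkBound (d - t) (t + γ) (q ⟨t, ht⟩) ≤ headMass γ q t * (1 - q ⟨t, ht⟩)

lemma ShrinkCond.succ {γ : ℝ} {q : Fin d → ℝ} (hq : ∀ j, q j ∈ Set.Icc (0 : ℝ) 1)
    (hsort : Antitone q) {t : ℕ} (ht : t + 1 < d) (ha : 0 < (t : ℝ) + γ)
    (h : ShrinkCond γ q t (Nat.lt_of_succ_lt ht)) : ShrinkCond γ q (t + 1) ht := by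
  have hd : (2 : ℝ) ≤ d - t := by
    have : ((t + 2 : ℕ) : ℝ) ≤ d := by exact_mod_cast ht
    push_cast at this; linarith
  have := shrinkBound_cond_succ ha hd (hq _)
    (hq ⟨t + 1, ht⟩).1 (hsort (Fin.mk_le_mk.2 (Nat.le_succ t))) h
  rw [ShrinkCond, headMass_succ γ q (Nat.lt_of_succ_lt ht)]
  convert this using 3 <;> push_cast <;> ring

lemma ShrinkCond.of_le {γ : ℝ} {q : Fin d → ℝ} (hq : ∀ j, q j ∈ Set.Icc (0 : ℝ) 1)
    (hsort : Antitone q) {τ : ℕ} {hτd : τ < d} (hpos : 0 < (τ : ℝ) + γ)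
    (hτ : ShrinkCond γ q τ hτd) {t : ℕ} (hτt : τ ≤ t) (ht : t < d) : ShrinkCond γ q t ht := by
  induction t, hτt using Nat.le_induction with
  | base => exact hτ
  | succ t hτt ih =>
    have ha : 0 < (t : ℝ) + γ := by
      have : (τ : ℝ) ≤ t := by exact_mod_cast hτt
      linarith
    exact ShrinkCond.succ hq hsort ht ha (ih _)

lemma iouVol_succ_le {γ : ℝ} {q : Fin d → ℝ} (hq : ∀ j, q j ∈ Set.Icc (0 : ℝ) 1)
    (hsort : Antitone q) {t : ℕ} (ht : t < d) (ha : 0 < (t : ℝ) + γ)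
    (hcond : ShrinkCond γ q t ht) :
    iouVol γ q (t + 1) ≤ iouVol γ q t := by
  set i : Fin d := ⟨t, ht⟩
  have hmean : ∑ j ∈ tailIdx d (t + 1), q j ≤ ((d : ℝ) - t - 1) * q i := by
    have := sum_le_card_nsmul (tailIdx d (t + 1)) q (q i) fun j hj =>
      hsort (Fin.le_def.2 (by simp only [tailIdx, mem_filter] at hj; simp only [i]; omega))
    rwa [card_tailIdx, nsmul_eq_mul, Nat.cast_sub ht, Nat.cast_succ, sub_add_eq_sub_sub] at this
  have hshift :
      (fun l : ℕ => (((t + 1 : ℕ) : ℝ) + γ + l)⁻¹) = fun l : ℕ => ((t + γ) + 1 + l)⁻¹ := by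
    ext l; push_cast; ring_nf
  rw [iouVol_eq, iouVol_eq, hshift, headMass_succ γ q ht, tailIdx_eq_insert ht]
  refine poissonBinomialExpect_inv_step (notMem_tailIdx_succ ht) (fun j _ => hq j) (hq i).1 ha
    (le_trans ?_ hcond)
  have hsq : (t + γ + q i + ∑ j ∈ tailIdx d (t + 1), q j) ^ 2 ≤ ((d - t) * q i + (t + γ)) ^ 2 :=
    pow_le_pow_left₀ (add_nonneg (by linarith [(hq i).1]) (sum_nonneg fun j _ => (hq j).1))
      (by linarith) 2
  rw [mul_div_assoc]
  exact mul_le_mul_of_nonneg_left ((div_le_div_of_nonneg_right hsq ha.le).trans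
    (le_max_right _ _)) (hq i).1

end IoU

theorem iouVol_shrinkage_general {d : ℕ} (γ : ℝ) (q : Fin d → ℝ)
    (hq : ∀ j, q j ∈ Set.Icc (0 : ℝ) 1) (hsort : Antitone q)
    (τ : ℕ) (hτd : τ < d)
    (hpos : 0 < (τ : ℝ) + γ) (hlt : q ⟨τ, hτd⟩ < 1)
    (hcond : (q ⟨τ, hτd⟩ / (1 - q ⟨τ, hτd⟩)) *
        max ((d : ℝ) + γ)
          ((((d : ℝ) - (τ : ℝ)) * q ⟨τ, hτd⟩ + (τ : ℝ) + γ) ^ 2 / ((τ : ℝ) + γ)) ≤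
      (∑ s ∈ Finset.univ.filter (fun s : Fin d => (s : ℕ) < τ), q s) + γ) :
    ∀ τ', τ < τ' → τ' ≤ d → iouVol γ q τ' ≤ iouVol γ q τ := by
  have hτ : ShrinkCond γ q τ hτd := by
    have hB : shrinkBound (d - τ) (τ + γ) (q ⟨τ, hτd⟩) = max ((d : ℝ) + γ)
        ((((d : ℝ) - (τ : ℝ)) * q ⟨τ, hτd⟩ + (τ : ℝ) + γ) ^ 2 / ((τ : ℝ) + γ)) := by
      rw [shrinkBound]; congr 1 <;> ring
    rwa [ShrinkCond, hB, headMass, ← div_le_iff₀ (sub_pos.2 hlt), mul_div_right_comm]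
  intro τ' hττ' hτ'd
  induction τ', hττ' using Nat.le_induction with
  | base => exact iouVol_succ_le hq hsort hτd hpos hτ
  | succ t hτt ih =>
    have ht : t < d := by omega
    have hτt : τ ≤ t := Nat.le_of_succ_le hτt
    have ha : 0 < (t : ℝ) + γ := by
      have : (τ : ℝ) ≤ t := by exact_mod_cast hτt
      linarith
    exact (iouVol_succ_le hq hsort ht ha (hτ.of_le hq hsort hpos hτt ht)).trans (ih ht.le)

/-- **IoU shrinkage.** If `q_1 ≥ ⋯ ≥ q_d`, `γ ≥ 0`, `1 ≤ τ ≤ d-1`, `τ + γ > 0`,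
`q_{τ+1} < 1` and
`Σ_{s=1}^τ q_s + γ ≥ (q_{τ+1}/(1-q_{τ+1})) max(d+γ, ((d-τ)q_{τ+1}+τ+γ)²/(τ+γ))`,
then `ϖ(τ) ≥ ϖ(τ')` for all `τ' ∈ {τ+1,…,d}`. -/
theorem iouVol_shrinkage {d : ℕ} (γ : ℝ) (hγ : 0 ≤ γ) (q : Fin d → ℝ)
    (hq : ∀ j, q j ∈ Set.Icc (0 : ℝ) 1) (hsort : Antitone q)
    (τ : ℕ) (hτ1 : 1 ≤ τ) (hτd : τ < d)
    (hpos : 0 < (τ : ℝ) + γ) (hlt : q ⟨τ, hτd⟩ < 1)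
    (hcond : (q ⟨τ, hτd⟩ / (1 - q ⟨τ, hτd⟩)) *
        max ((d : ℝ) + γ)
          ((((d : ℝ) - (τ : ℝ)) * q ⟨τ, hτd⟩ + (τ : ℝ) + γ) ^ 2 / ((τ : ℝ) + γ)) ≤
      (∑ s ∈ Finset.univ.filter (fun s : Fin d => (s : ℕ) < τ), q s) + γ) :
    ∀ τ', τ < τ' → τ' ≤ d → iouVol γ q τ' ≤ iouVol γ q τ :=
  iouVol_shrinkage_general γ q hq hsort τ hτd hpos hlt hcond
end
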